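/- Let P and Q be finite-control cache algorithms with block-independent eviction, and suppose the difference in misses between P and Q is unbounded, i.e., for every m ∈ ℕ there is a trace t with |P(t) − Q(t)| > m. Then the difference grows linearly: there exist f > 0 and m0 ∈ ℕ such that for all m > m0 there exists a trace t of length m with |P(t) − Q(t)| > f·|t|. -/

import Mathlib

structure CacheAlg (B : Type) where
  S : Type
  init : S
  n : ℕ
  tr : S → Fin n → S
  evict : S → B → S × Fin n

variable {B : Type} [DecidableEq B]

abbrev CacheAlg.Config (P : CacheAlg B) := P.S × (Fin P.n → Option B)

noncomputable def CacheAlg.upd (P : CacheAlg B) (g : P.Config) (b : B) : P.Config :=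
  if h : ∃ j, g.2 j = some b then (P.tr g.1 h.choose, g.2)
  else ((P.evict g.1 b).1, Function.update g.2 (P.evict g.1 b).2 (some b))

noncomputable def CacheAlg.updTrace (P : CacheAlg B) (g : P.Config) : List B → P.Config
  | [] => g
  | b :: t => P.updTrace (P.upd g b) t

noncomputable def CacheAlg.missesFrom (P : CacheAlg B) (g : P.Config) : List B → ℕ
  | [] => 0
  | b :: t => (if ∃ j, g.2 j = some b then 0 else 1) + P.missesFrom (P.upd g b) t

def CacheAlg.initConfig (P : CacheAlg B) : P.Config := (P.init, fun _ => none)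

/-- Number of misses of `P` on trace `t` from the empty initial configuration. -/
noncomputable def CacheAlg.misses (P : CacheAlg B) (t : List B) : ℕ := P.missesFrom P.initConfig t

/-- The leak ratio `r_{P,Q}(l)`: supremum over sets `T` of traces of length `l`
of `|P(T)| / |Q(T)|`. -/
noncomputable def leakRatio (P Q : CacheAlg B) (l : ℕ) : ℝ :=
  sSup {r : ℝ | ∃ T : Finset (List B), T.Nonempty ∧ (∀ t ∈ T, t.length = l) ∧
    r = ((T.image P.misses).card : ℝ) / ((T.image Q.misses).card : ℝ)}

/-- Lifting of a bijection on blocks to cache contents, mapping `⊥` to `⊥`. -/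
def renameContent (π : B ≃ B) {n : ℕ} (c : Fin n → Option B) : Fin n → Option B :=
  fun j => (c j).map π

/-- Lifting of a bijection on blocks to cache configurations. -/
def CacheAlg.renameConfig (P : CacheAlg B) (π : B ≃ B) (g : P.Config) : P.Config :=
  (g.1, renameContent π g.2)

/-- The eviction function is independent of the accessed block. -/
def CacheAlg.EvictBlockIndep (P : CacheAlg B) : Prop :=
  ∀ (s : P.S) (b b' : B), P.evict s b = P.evict s b'

/-- Congruence of pairs of cache configurations via a simultaneous renaming. -/
def CacheCongruent (P Q : CacheAlg B) (x y : P.Config × Q.Config) : Prop :=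
  ∃ π : B ≃ B, P.renameConfig π x.1 = y.1 ∧ Q.renameConfig π x.2 = y.2

/-!
Up to a simultaneous renaming of blocks, a pair of configurations of `P` and `Q` is determined by
its control states and by which cache slots are empty or hold equal blocks, so there are only
finitely many congruence classes, say `N`. Because eviction ignores the accessed block, renaming
commutes with updates and preserves miss counts. Along a trace the miss difference changes by at
most one per access; if it ends above `N` in absolute value, two prefixes `u` and `u ++ w` reach
congruent pairs (via some `π`) with different miss differences. Appending `π w`, `π² w`, … then
changes the difference by the same nonzero amount each time, and a prefix of `w` as padding
reaches every length.
-/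

theorem exists_eq_of_le_of_succ_le_add_one {f : ℕ → ℤ} (hstep : ∀ l, f (l + 1) ≤ f l + 1)
    {v : ℤ} (h0 : f 0 ≤ v) : ∀ {n : ℕ}, v ≤ f n → ∃ l, f l = v
  | 0, hn => ⟨0, le_antisymm h0 hn⟩
  | n + 1, hn => by
    by_cases hv : v ≤ f n
    · exact exists_eq_of_le_of_succ_le_add_one hstep h0 hv
    · exact ⟨n + 1, by linarith [hstep n]⟩

theorem exists_eq_of_mem_uIcc {f : ℕ → ℤ} (hstep : ∀ l, |f (l + 1) - f l| ≤ 1) {n : ℕ} {v : ℤ}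
    (hv : v ∈ Finset.uIcc (f 0) (f n)) : ∃ l, f l = v := by
  rcases le_total (f 0) (f n) with h | h
  · rw [Finset.uIcc_of_le h, Finset.mem_Icc] at hv
    exact exists_eq_of_le_of_succ_le_add_one (fun l => by linarith [abs_le.1 (hstep l)]) hv.1 hv.2
  · rw [Finset.uIcc_of_ge h, Finset.mem_Icc] at hv
    obtain ⟨l, hl⟩ := exists_eq_of_le_of_succ_le_add_one (f := fun l => -f l)
      (fun l => by linarith [abs_le.1 (hstep l)]) (neg_le_neg hv.2) (neg_le_neg hv.1)
    exact ⟨l, neg_inj.1 hl⟩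

theorem exists_lt_map_eq_map_ne_of_card_lt {α : Type*} [Finite α] (σ : ℕ → α) {f : ℕ → ℤ}
    (hstep : ∀ l, |f (l + 1) - f l| ≤ 1) {n : ℕ} (hn : (Nat.card α : ℤ) < |f n - f 0|) :
    ∃ l₁ l₂, l₁ < l₂ ∧ σ l₁ = σ l₂ ∧ f l₁ ≠ f l₂ := by
  have := Fintype.ofFinite α
  choose! time htime using
    fun v (hv : v ∈ Finset.uIcc (f 0) (f n)) => exists_eq_of_mem_uIcc hstep hv
  have hcard : (Finset.univ : Finset α).card < (Finset.uIcc (f 0) (f n)).card := by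
    rw [Finset.card_univ, ← Nat.card_eq_fintype_card, Int.card_uIcc]
    rw [Int.abs_eq_natAbs] at hn
    omega
  obtain ⟨v, hv, v', hv', hne, hσ⟩ := Finset.exists_ne_map_eq_of_card_lt_of_maps_to hcard
    (f := σ ∘ time) fun _ _ => Finset.mem_coe.2 (Finset.mem_univ _)
  have hf : f (time v) ≠ f (time v') := by rwa [htime v hv, htime v' hv']
  rcases lt_or_gt_of_ne (ne_of_apply_ne f hf) with h | h
  · exact ⟨_, _, h, hσ, hf⟩
  · exact ⟨_, _, h, hσ.symm, hf.symm⟩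

theorem exists_equiv_map_eq_of_eq_iff {ι β : Type*} [Finite ι] [Infinite β] {c d : ι → Option β}
    (heq : ∀ i j, c i = c j ↔ d i = d j) (hnone : ∀ i, c i = none ↔ d i = none) :
    ∃ π : β ≃ β, ∀ i, (c i).map π = d i := by
  set S : Set β := Option.some ⁻¹' Set.range c
  have hS : S.Finite := (Set.finite_range c).preimage (Option.some_injective β).injOn
  have hval : ∀ b : S, ∃ i b', c i = some b ∧ d i = some b' := by
    rintro ⟨b, i, hi⟩
    obtain ⟨b', hb'⟩ := Option.ne_none_iff_exists'.1 fun h => by simp [(hnone i).2 h] at hi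
    exact ⟨i, b', hi, hb'⟩
  choose idx F hcF hdF using hval
  have hF : ∀ i (b : S), c i = some b → d i = some (F b) := fun i b h =>
    ((heq i (idx b)).1 (h.trans (hcF b).symm)).trans (hdF b)
  have hinj : Function.Injective F := by
    intro b b' h
    have hc : c (idx b) = c (idx b') := (heq _ _).2 (by rw [hdF, hdF, h])
    rw [hcF, hcF] at hc
    exact Subtype.ext (Option.some_injective _ hc)
  obtain ⟨π, hπ⟩ := Cardinal.extend_function_of_lt ⟨F, hinj⟩
    (hS.lt_aleph0.trans_le (Cardinal.aleph0_le_mk β)) ⟨Equiv.refl β⟩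
  refine ⟨π, fun i => ?_⟩
  cases hc : c i with
  | none => exact ((hnone i).1 hc).symm
  | some b =>
    rw [Option.map_some, hπ ⟨b, i, hc⟩]
    exact (hF i ⟨b, i, hc⟩ hc).symm

def GrowsLinearly {α : Type*} (φ : List α → ℝ) : Prop :=
  ∃ f : ℝ, 0 < f ∧ ∃ m0 : ℕ, ∀ m > m0, ∃ t : List α, t.length = m ∧ f * (t.length : ℝ) < φ t

theorem growsLinearly_of_progression {α : Type*} {φ : List α → ℝ} {a L c : ℕ} (hL : 0 < L)
    (h : ∀ q, ∀ r < L, ∃ t : List α, t.length = a + q * L + r ∧ (q : ℝ) ≤ φ t + c) :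
    GrowsLinearly φ := by
  refine ⟨1 / (2 * L), by positivity, a + (a + 1 + 2 * c) * L, fun m hm => ?_⟩
  have hq : a + 1 + 2 * c ≤ (m - a) / L := (Nat.le_div_iff_mul_le hL).2 (by omega)
  have hm_eq : m = a + (m - a) / L * L + (m - a) % L := by
    have := Nat.div_add_mod' (m - a) L
    omega
  obtain ⟨t, htlen, hφ⟩ := h ((m - a) / L) _ (Nat.mod_lt _ hL)
  refine ⟨t, htlen.trans hm_eq.symm, ?_⟩
  have hLR : (1 : ℝ) ≤ L := by exact_mod_cast hL
  have hqR : (a : ℝ) + 1 + 2 * c ≤ ((m - a) / L : ℕ) := by exact_mod_cast hq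
  have hrR : (((m - a) % L : ℕ) : ℝ) + 1 ≤ L := by exact_mod_cast Nat.mod_lt _ hL
  rw [htlen, one_div, inv_mul_lt_iff₀ (by positivity)]
  push_cast
  nlinarith

def pumpedTrace {α : Type*} (π : Equiv.Perm α) (u w : List α) : ℕ → List α
  | 0 => u
  | i + 1 => pumpedTrace π u w i ++ w.map (π ^ i)

theorem length_pumpedTrace {α : Type*} (π : Equiv.Perm α) (u w : List α) (i : ℕ) :
    (pumpedTrace π u w i).length = u.length + i * w.length := by
  induction i with
  | zero => simp [pumpedTrace]
  | succ i ih => simp only [pumpedTrace, List.length_append, ih, List.length_map]; ring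

namespace CacheAlg

theorem renameConfig_one {B : Type} (P : CacheAlg B) (g : P.Config) : P.renameConfig 1 g = g :=
  Prod.ext rfl (funext fun j => by simp [renameConfig, renameContent])

theorem renameConfig_mul {B : Type} (P : CacheAlg B) (σ τ : Equiv.Perm B) (g : P.Config) :
    P.renameConfig (σ * τ) g = P.renameConfig σ (P.renameConfig τ g) :=
  Prod.ext rfl (funext fun j => by simp [renameConfig, renameContent, Option.map_map])

theorem renameConfig_snd_eq_some_iff {B : Type} (P : CacheAlg B) (π : B ≃ B) (g : P.Config)
    (b : B) (j : Fin P.n) : (P.renameConfig π g).2 j = some (π b) ↔ g.2 j = some b :=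
  (Option.map_injective π.injective).eq_iff' rfl

variable (P : CacheAlg B)

theorem updTrace_append (g : P.Config) (s t : List B) :
    P.updTrace g (s ++ t) = P.updTrace (P.updTrace g s) t := by
  induction s generalizing g with
  | nil => rfl
  | cons b s ih => exact ih (P.upd g b)

theorem missesFrom_append (g : P.Config) (s t : List B) :
    P.missesFrom g (s ++ t) = P.missesFrom g s + P.missesFrom (P.updTrace g s) t := by
  induction s generalizing g with
  | nil => simp [missesFrom, updTrace]
  | cons b s ih => simp only [List.cons_append, missesFrom, ih, updTrace, Nat.add_assoc]

theorem misses_append (s t : List B) :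
    P.misses (s ++ t) = P.misses s + P.missesFrom (P.updTrace P.initConfig s) t :=
  P.missesFrom_append _ s t

theorem missesFrom_le_length (g : P.Config) (t : List B) : P.missesFrom g t ≤ t.length := by
  induction t generalizing g with
  | nil => exact le_rfl
  | cons b t ih =>
    simp only [missesFrom, List.length_cons]
    split <;> linarith [ih (P.upd g b)]

variable {P}

theorem upd_renameConfig (hP : P.EvictBlockIndep) (π : B ≃ B) (g : P.Config) (b : B) :
    P.upd (P.renameConfig π g) (π b) = P.renameConfig π (P.upd g b) := by
  unfold upd
  simp only [renameConfig_snd_eq_some_iff]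
  split_ifs
  · rfl
  · simp only [renameConfig, hP g.1 (π b) b, Prod.mk.injEq, true_and]
    funext j
    exact (Function.apply_update (fun _ => Option.map π) g.2 (P.evict g.1 b).2 (some b) j).symm

theorem updTrace_renameConfig (hP : P.EvictBlockIndep) (π : B ≃ B) (g : P.Config) (t : List B) :
    P.updTrace (P.renameConfig π g) (t.map π) = P.renameConfig π (P.updTrace g t) := by
  induction t generalizing g with
  | nil => rfl
  | cons b t ih => simp only [List.map_cons, updTrace, upd_renameConfig hP, ih]

theorem missesFrom_renameConfig (hP : P.EvictBlockIndep) (π : B ≃ B) (g : P.Config)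
    (t : List B) : P.missesFrom (P.renameConfig π g) (t.map π) = P.missesFrom g t := by
  induction t generalizing g with
  | nil => rfl
  | cons b t ih =>
    simp only [List.map_cons, missesFrom, upd_renameConfig hP, ih, renameConfig_snd_eq_some_iff]

variable {π : Equiv.Perm B} {u w : List B}

theorem updTrace_pumpedTrace (hP : P.EvictBlockIndep)
    (hw : P.renameConfig π (P.updTrace P.initConfig u) = P.updTrace P.initConfig (u ++ w))
    (i : ℕ) : P.updTrace P.initConfig (pumpedTrace π u w i) =
      P.renameConfig (π ^ i) (P.updTrace P.initConfig u) := by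
  induction i with
  | zero => exact (P.renameConfig_one _).symm
  | succ i ih =>
    rw [pumpedTrace, updTrace_append, ih, updTrace_renameConfig hP, ← updTrace_append, ← hw,
      ← renameConfig_mul, pow_succ]

theorem misses_pumpedTrace (hP : P.EvictBlockIndep)
    (hw : P.renameConfig π (P.updTrace P.initConfig u) = P.updTrace P.initConfig (u ++ w))
    (i : ℕ) : P.misses (pumpedTrace π u w i) =
      P.misses u + i * P.missesFrom (P.updTrace P.initConfig u) w := by
  induction i with
  | zero => simp [pumpedTrace]
  | succ i ih =>
    rw [pumpedTrace, misses_append, ih, updTrace_pumpedTrace hP hw, missesFrom_renameConfig hP]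
    ring

end CacheAlg

noncomputable def jointConfig (P Q : CacheAlg B) (t : List B) : P.Config × Q.Config :=
  (P.updTrace P.initConfig t, Q.updTrace Q.initConfig t)

noncomputable def missDiff (P Q : CacheAlg B) (t : List B) : ℤ := P.misses t - Q.misses t

section MissDiff

variable {P Q : CacheAlg B}

theorem missDiff_nil : missDiff P Q [] = 0 := rfl

theorem abs_missDiff_append_sub_le (s t : List B) :
    |missDiff P Q (s ++ t) - missDiff P Q s| ≤ t.length := by
  have hP := P.missesFrom_le_length (P.updTrace P.initConfig s) t
  have hQ := Q.missesFrom_le_length (Q.updTrace Q.initConfig s) t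
  rw [missDiff, missDiff, P.misses_append, Q.misses_append, abs_le]
  omega

theorem missDiff_pumpedTrace (hP : P.EvictBlockIndep) (hQ : Q.EvictBlockIndep)
    {π : Equiv.Perm B} {u w : List B}
    (hπ : P.renameConfig π (jointConfig P Q u).1 = (jointConfig P Q (u ++ w)).1 ∧
      Q.renameConfig π (jointConfig P Q u).2 = (jointConfig P Q (u ++ w)).2)
    (i : ℕ) :
    missDiff P Q (pumpedTrace π u w i) =
      missDiff P Q u + i * (missDiff P Q (u ++ w) - missDiff P Q u) := by
  simp only [missDiff, CacheAlg.misses_pumpedTrace hP hπ.1, CacheAlg.misses_pumpedTrace hQ hπ.2,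
    CacheAlg.misses_append]
  push_cast
  ring

end MissDiff

abbrev ConfigPairSignature {B : Type} (P Q : CacheAlg B) :=
  (P.S × Q.S) × (Fin P.n ⊕ Fin Q.n → Fin P.n ⊕ Fin Q.n → Prop) × (Fin P.n ⊕ Fin Q.n → Prop)

def configPairSignature {B : Type} (P Q : CacheAlg B) (x : P.Config × Q.Config) :
    ConfigPairSignature P Q :=
  let c := Sum.elim x.1.2 x.2.2
  ((x.1.1, x.2.1), fun i j => c i = c j, fun i => c i = none)

theorem cacheCongruent_of_configPairSignature_eq {B : Type} [Infinite B] {P Q : CacheAlg B}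
    {x y : P.Config × Q.Config} (h : configPairSignature P Q x = configPairSignature P Q y) :
    CacheCongruent P Q x y := by
  simp only [configPairSignature, Prod.mk.injEq] at h
  obtain ⟨⟨hsP, hsQ⟩, heq, hnone⟩ := h
  obtain ⟨π, hπ⟩ := exists_equiv_map_eq_of_eq_iff
    (fun i j => (congrFun (congrFun heq i) j).to_iff) (fun i => (congrFun hnone i).to_iff)
  exact ⟨π, Prod.ext hsP (funext fun j => hπ (Sum.inl j)),
    Prod.ext hsQ (funext fun j => hπ (Sum.inr j))⟩

theorem exists_cacheCongruent_split_of_card_lt [Infinite B] {P Q : CacheAlg B} [Finite P.S]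
    [Finite Q.S] {t : List B} (ht : (Nat.card (ConfigPairSignature P Q) : ℤ) < |missDiff P Q t|) :
    ∃ u w, CacheCongruent P Q (jointConfig P Q u) (jointConfig P Q (u ++ w)) ∧
      missDiff P Q u ≠ missDiff P Q (u ++ w) := by
  have hstep (l : ℕ) : |missDiff P Q (t.take (l + 1)) - missDiff P Q (t.take l)| ≤ 1 := by
    rw [List.take_add_one]
    exact (abs_missDiff_append_sub_le _ _).trans (by cases t[l]? <;> simp)
  obtain ⟨l₁, l₂, hlt, hsig, hne⟩ := exists_lt_map_eq_map_ne_of_card_lt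
    (fun l => configPairSignature P Q (jointConfig P Q (t.take l)))
    (f := fun l => missDiff P Q (t.take l)) hstep (n := t.length)
    (by simpa [missDiff_nil] using ht)
  have hsplit : t.take l₁ ++ (t.take l₂).drop l₁ = t.take l₂ := by
    have htake : (t.take l₂).take l₁ = t.take l₁ := by rw [List.take_take, min_eq_left hlt.le]
    rw [← htake, List.take_append_drop]
  refine ⟨t.take l₁, (t.take l₂).drop l₁, ?_, ?_⟩ <;> rw [hsplit]
  exacts [cacheCongruent_of_configPairSignature_eq hsig, hne]

theorem growsLinearly_of_cacheCongruent_split {P Q : CacheAlg B} (hP : P.EvictBlockIndep)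
    (hQ : Q.EvictBlockIndep) {u w : List B}
    (hcong : CacheCongruent P Q (jointConfig P Q u) (jointConfig P Q (u ++ w)))
    (hne : missDiff P Q u ≠ missDiff P Q (u ++ w)) :
    GrowsLinearly fun t : List B => |(P.misses t : ℝ) - (Q.misses t : ℝ)| := by
  obtain ⟨π, hπ⟩ := hcong
  have hw : 0 < w.length := List.length_pos_iff.2 (by rintro rfl; simp at hne)
  refine growsLinearly_of_progression (a := u.length) (c := (missDiff P Q u).natAbs + w.length) hw
    fun q r hr => ⟨pumpedTrace π u w q ++ w.take r, by simp [length_pumpedTrace, hr.le], ?_⟩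
  set D := missDiff P Q (pumpedTrace π u w q ++ w.take r) with hD
  set D₀ := missDiff P Q u
  set d := missDiff P Q (u ++ w) - D₀
  have hpad : |D - (D₀ + q * d)| ≤ w.length := by
    rw [← missDiff_pumpedTrace hP hQ hπ]
    exact (abs_missDiff_append_sub_le _ _).trans (by exact_mod_cast List.length_take_le' _ _)
  have hgain : (q : ℤ) ≤ |q * d| := by
    rw [abs_mul, Nat.abs_cast]
    exact le_mul_of_one_le_right (by positivity) (Int.one_le_abs (sub_ne_zero.2 hne.symm))
  have key : (q : ℤ) ≤ |D| + (D₀.natAbs + w.length : ℕ) := by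
    rw [Nat.cast_add, Int.natCast_natAbs]
    rcases abs_cases (q * d) with ⟨h, -⟩ | ⟨h, -⟩ <;>
      linarith [abs_le.1 hpad, le_abs_self D, neg_abs_le D, le_abs_self D₀, neg_abs_le D₀]
  have key_real := (Int.cast_le (R := ℝ)).2 key
  push_cast [hD, missDiff, Nat.cast_natAbs] at key_real ⊢
  exact key_real

theorem unbounded_diff_linear_growth (P Q : CacheAlg B) [Infinite B]
    [Finite P.S] [Finite Q.S]
    (hP : P.EvictBlockIndep) (hQ : Q.EvictBlockIndep)
    (hub : ∀ m : ℕ, ∃ t : List B, (m : ℤ) < |(P.misses t : ℤ) - (Q.misses t : ℤ)|) :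
    ∃ f : ℝ, 0 < f ∧ ∃ m0 : ℕ, ∀ m > m0, ∃ t : List B, t.length = m ∧
      f * (t.length : ℝ) < |(P.misses t : ℝ) - (Q.misses t : ℝ)| := by
  obtain ⟨t, ht⟩ := hub (Nat.card (ConfigPairSignature P Q))
  obtain ⟨u, w, hcong, hne⟩ := exists_cacheCongruent_split_of_card_lt ht
  exact growsLinearly_of_cacheCongruent_split hP hQ hcong hne
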